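/- With notation as above, the fuzzy Prokhorov function M̂ satisfies the fuzzy triangle inequality with respect to the Łukasiewicz t-norm: M̂(μ, ν, t) * M̂(ν, τ, s) ≤ M̂(μ, τ, t + s) for all μ, ν, τ ∈ P(X) and t, s > 0, where a * b = max(a + b - 1, 0). -/

import Mathlib

open Set MeasureTheory Filter Topology

noncomputable section

/-- The Łukasiewicz t-norm. -/
def luk (a b : ℝ) : ℝ := max (a + b - 1) 0

/-- A continuous t-norm on `[0,1]`. -/
structure IsContinuousTNorm (star : ℝ → ℝ → ℝ) : Prop where
  maps_to : ∀ a b, a ∈ Icc (0:ℝ) 1 → b ∈ Icc (0:ℝ) 1 → star a b ∈ Icc (0:ℝ) 1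
  comm : ∀ a b, a ∈ Icc (0:ℝ) 1 → b ∈ Icc (0:ℝ) 1 → star a b = star b a
  assoc : ∀ a b c, a ∈ Icc (0:ℝ) 1 → b ∈ Icc (0:ℝ) 1 → c ∈ Icc (0:ℝ) 1 →
    star (star a b) c = star a (star b c)
  continuous : ContinuousOn (fun p : ℝ × ℝ => star p.1 p.2) (Icc 0 1 ×ˢ Icc 0 1)
  one_right : ∀ a, a ∈ Icc (0:ℝ) 1 → star a 1 = a
  mono : ∀ a b c d, a ∈ Icc (0:ℝ) 1 → b ∈ Icc (0:ℝ) 1 → c ∈ Icc (0:ℝ) 1 →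
    d ∈ Icc (0:ℝ) 1 → a ≤ c → b ≤ d → star a b ≤ star c d

/-- A fuzzy metric (George–Veeramani) with respect to a t-norm `star`. -/
structure IsFuzzyMetric {X : Type*} (M : X → X → ℝ → ℝ) (star : ℝ → ℝ → ℝ) : Prop where
  pos : ∀ x y t, 0 < t → 0 < M x y t
  le_one : ∀ x y t, 0 < t → M x y t ≤ 1
  eq_one_iff : ∀ x y t, 0 < t → (M x y t = 1 ↔ x = y)
  symm : ∀ x y t, 0 < t → M x y t = M y x t
  triangle : ∀ x y z t s, 0 < t → 0 < s → star (M x y t) (M y z s) ≤ M x z (t + s)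
  continuousOn : ∀ x y, ContinuousOn (fun t => M x y t) (Ioi (0:ℝ))

/-- The open ball `B(x,r,t)` in a fuzzy metric space. -/
def fmBall {X : Type*} (M : X → X → ℝ → ℝ) (x : X) (r t : ℝ) : Set X :=
  {y | 1 - r < M x y t}

/-- The `r,t`-expansion `A^{r,t}` of a set `A`. -/
def fmExpand {X : Type*} (M : X → X → ℝ → ℝ) (A : Set X) (r t : ℝ) : Set X :=
  ⋃ x ∈ A, fmBall M x r t

/-- The fuzzy metric `M` generates the given topology on `X`. -/
def GeneratesTopology {X : Type*} [TopologicalSpace X] (M : X → X → ℝ → ℝ) : Prop :=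
  TopologicalSpace.IsTopologicalBasis
    {s : Set X | ∃ x r t, 0 < r ∧ r < 1 ∧ 0 < t ∧ s = fmBall M x r t}

/-- The set of admissible radii in the definition of the fuzzy Prokhorov metric. -/
def prokSet {X : Type*} [MeasurableSpace X] (M : X → X → ℝ → ℝ)
    (μ ν : Measure X) (t : ℝ) : Set ℝ :=
  {r | 0 < r ∧ r < 1 ∧ ∀ A : Set X, MeasurableSet A →
    μ A ≤ ν (fmExpand M A r t) + ENNReal.ofReal r ∧
    ν A ≤ μ (fmExpand M A r t) + ENNReal.ofReal r}

/-- The fuzzy Prokhorov function `M̂` on measures. -/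
def fuzzyProkhorov {X : Type*} [MeasurableSpace X] (M : X → X → ℝ → ℝ)
    (μ ν : Measure X) (t : ℝ) : ℝ :=
  1 - sInf (prokSet M μ ν t)

/-!
With `P(μ, ν, t)` the set of admissible radii, `M̂ = 1 - inf P`. The Łukasiewicz triangle
inequality for `M` gives `(A^{r,t})^{r',s} ⊆ A^{r+r',t+s}`, so admissible radii `r` for `(μ, ν, t)`
and `r'` for `(ν, τ, s)` add up to an admissible radius for `(μ, τ, t + s)` as long as
`r + r' < 1`. Hence `inf P(μ, τ, t + s) ≤ inf P(μ, ν, t) + inf P(ν, τ, s)`, which is the claim.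
This needs the sets of radii to be nonempty (`sInf ∅ = 0`): on a compact space `M(·, ·, t)` is bounded below by
some `c > 0`, so every radius `r > 1 - c` is admissible.
-/

theorem IsCompact.exists_pos_forall_lt {Y : Type*} [TopologicalSpace Y] {K : Set Y}
    (hK : IsCompact K) {f : Y → ℝ} (hf : ∀ y ∈ K, ∃ c > 0, ∀ᶠ z in 𝓝 y, c < f z) :
    ∃ c > 0, ∀ y ∈ K, c < f y := by
  refine hK.induction_on (p := fun S => ∃ c > 0, ∀ y ∈ S, c < f y) ⟨1, one_pos, by simp⟩
    (fun S T hST ⟨c, hc, hT⟩ => ⟨c, hc, fun y hy => hT y (hST hy)⟩)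
    (fun S T ⟨c, hc, hS⟩ ⟨d, hd, hT⟩ => ⟨min c d, lt_min hc hd, ?_⟩) fun y hy => ?_
  · rintro z (hz | hz)
    · exact (min_le_left c d).trans_lt (hS z hz)
    · exact (min_le_right c d).trans_lt (hT z hz)
  · obtain ⟨c, hc, hev⟩ := hf y hy
    exact ⟨_, mem_nhdsWithin_of_mem_nhds hev, c, hc, fun _ hz => hz⟩

section FuzzyMetric

variable {X : Type*} {M : X → X → ℝ → ℝ} {r r' t s : ℝ}

theorem GeneratesTopology.isOpen_fmBall [TopologicalSpace X] (hgen : GeneratesTopology M)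
    (x : X) (hr0 : 0 < r) (hr1 : r < 1) (ht : 0 < t) : IsOpen (fmBall M x r t) :=
  hgen.isOpen ⟨x, r, t, hr0, hr1, ht, rfl⟩

theorem GeneratesTopology.isOpen_fmExpand [TopologicalSpace X] (hgen : GeneratesTopology M)
    (A : Set X) (hr0 : 0 < r) (hr1 : r < 1) (ht : 0 < t) : IsOpen (fmExpand M A r t) :=
  isOpen_biUnion fun x _ => hgen.isOpen_fmBall x hr0 hr1 ht

namespace IsFuzzyMetric

theorem add_sub_one_le (hM : IsFuzzyMetric M luk) (x y z : X) (ht : 0 < t) (hs : 0 < s) :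
    M x y t + M y z s - 1 ≤ M x z (t + s) :=
  (le_max_left _ _).trans (hM.triangle x y z t s ht hs)

theorem mem_fmBall_self {star : ℝ → ℝ → ℝ} (hM : IsFuzzyMetric M star) (x : X) (hr : 0 < r)
    (ht : 0 < t) : x ∈ fmBall M x r t := by
  show 1 - r < M x x t
  rw [(hM.eq_one_iff x x t ht).2 rfl]
  linarith

theorem fmExpand_fmExpand_subset (hM : IsFuzzyMetric M luk) (A : Set X) (ht : 0 < t)
    (hs : 0 < s) : fmExpand M (fmExpand M A r t) r' s ⊆ fmExpand M A (r + r') (t + s) := by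
  simp only [fmExpand, subset_def, mem_iUnion₂]
  rintro z ⟨y, ⟨x, hx, hxy⟩, hyz⟩
  refine ⟨x, hx, ?_⟩
  have hxz := hM.add_sub_one_le x y z ht hs
  simp only [fmBall, mem_ofPred_eq] at hxy hyz ⊢
  linarith

/-- With `m = M x y (t/2)`, the bound `m/2` holds on `B(x, m/4, t/4) × B(y, m/4, t/4)`. -/
theorem exists_pos_eventually_lt [TopologicalSpace X] (hM : IsFuzzyMetric M luk)
    (hgen : GeneratesTopology M) (p : X × X) (ht : 0 < t) :
    ∃ c > 0, ∀ᶠ q in 𝓝 p, c < M q.1 q.2 t := by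
  set m := M p.1 p.2 (t / 2)
  have hm0 : 0 < m := hM.pos _ _ _ (by linarith)
  have hm1 : m ≤ 1 := hM.le_one _ _ _ (by linarith)
  have ht4 : 0 < t / 4 := by linarith
  have hball : ∀ x, fmBall M x (m / 4) (t / 4) ∈ 𝓝 x := fun x =>
    (hgen.isOpen_fmBall x (by linarith) (by linarith) ht4).mem_nhds
      (hM.mem_fmBall_self x (by linarith) ht4)
  refine ⟨m / 2, half_pos hm0, ?_⟩
  filter_upwards [prod_mem_nhds (hball p.1) (hball p.2)] with q ⟨hx, hy⟩
  simp only [fmBall, mem_ofPred_eq] at hx hy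
  have hpq := hM.add_sub_one_le p.1 p.2 q.2 (by linarith : 0 < t / 2) ht4
  have hqq := hM.add_sub_one_le q.1 p.1 q.2 ht4 (by linarith : 0 < t / 2 + t / 4)
  rw [hM.symm q.1 p.1 _ ht4, show t / 4 + (t / 2 + t / 4) = t by ring] at hqq
  linarith

theorem exists_pos_forall_lt [TopologicalSpace X] [CompactSpace X] (hM : IsFuzzyMetric M luk)
    (hgen : GeneratesTopology M) (ht : 0 < t) : ∃ c > 0, ∀ x y, c < M x y t := by
  obtain ⟨c, hc, hlt⟩ := (isCompact_univ (X := X × X)).exists_pos_forall_lt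
    fun p _ => hM.exists_pos_eventually_lt hgen p ht
  exact ⟨c, hc, fun x y => hlt (x, y) (mem_univ _)⟩

end IsFuzzyMetric

section Prokhorov

variable [MeasurableSpace X] {μ ν τ : Measure X}

theorem bddBelow_prokSet : BddBelow (prokSet M μ ν t) :=
  ⟨0, fun _ hr => hr.1.le⟩

theorem sInf_prokSet_le_one : sInf (prokSet M μ ν t) ≤ 1 := by
  rcases (prokSet M μ ν t).eq_empty_or_nonempty with h | ⟨r, hr⟩
  · rw [h, Real.sInf_empty]
    exact zero_le_one
  · exact (csInf_le bddBelow_prokSet hr).trans hr.2.1.le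

theorem prokSet_nonempty [TopologicalSpace X] [CompactSpace X] (hM : IsFuzzyMetric M luk)
    (hgen : GeneratesTopology M) (μ ν : Measure X) [IsProbabilityMeasure μ]
    [IsProbabilityMeasure ν] (ht : 0 < t) : (prokSet M μ ν t).Nonempty := by
  obtain ⟨c, hc, hlt⟩ := hM.exists_pos_forall_lt hgen ht
  set r := 1 - min c (1 / 2)
  have hexpand : ∀ A : Set X, A.Nonempty → fmExpand M A r t = univ := by
    rintro A ⟨a, ha⟩
    refine eq_univ_of_forall fun y => mem_biUnion ha ?_
    show 1 - r < M a y t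
    linarith [min_le_left c (1 / 2), hlt a y]
  refine ⟨r, by linarith [min_le_right c (1 / 2)], by linarith [lt_min hc one_half_pos],
    fun A _ => ?_⟩
  rcases A.eq_empty_or_nonempty with rfl | hA
  · simp
  · rw [hexpand A hA, measure_univ, measure_univ]
    exact ⟨prob_le_one.trans le_self_add, prob_le_one.trans le_self_add⟩

theorem le_measure_fmExpand_add [TopologicalSpace X] [OpensMeasurableSpace X]
    (hM : IsFuzzyMetric M luk) (hgen : GeneratesTopology M) (hr0 : 0 < r) (hr1 : r < 1)
    (hr' : 0 ≤ r') (ht : 0 < t) (hs : 0 < s)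
    (hμν : ∀ A, MeasurableSet A → μ A ≤ ν (fmExpand M A r t) + ENNReal.ofReal r)
    (hντ : ∀ A, MeasurableSet A → ν A ≤ τ (fmExpand M A r' s) + ENNReal.ofReal r')
    {A : Set X} (hA : MeasurableSet A) :
    μ A ≤ τ (fmExpand M A (r + r') (t + s)) + ENNReal.ofReal (r + r') :=
  calc μ A ≤ ν (fmExpand M A r t) + ENNReal.ofReal r := hμν A hA
    _ ≤ τ (fmExpand M (fmExpand M A r t) r' s) + ENNReal.ofReal r' + ENNReal.ofReal r := by
      gcongr
      exact hντ _ (hgen.isOpen_fmExpand A hr0 hr1 ht).measurableSet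
    _ ≤ τ (fmExpand M A (r + r') (t + s)) + ENNReal.ofReal (r + r') := by
      rw [ENNReal.ofReal_add hr0.le hr', add_assoc, add_comm (ENNReal.ofReal r')]
      gcongr
      exact hM.fmExpand_fmExpand_subset A ht hs

theorem add_mem_prokSet [TopologicalSpace X] [OpensMeasurableSpace X]
    (hM : IsFuzzyMetric M luk) (hgen : GeneratesTopology M) (ht : 0 < t) (hs : 0 < s)
    (hr : r ∈ prokSet M μ ν t) (hr' : r' ∈ prokSet M ν τ s) (hlt : r + r' < 1) :
    r + r' ∈ prokSet M μ τ (t + s) := by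
  obtain ⟨hr0, hr1, hμν⟩ := hr
  obtain ⟨hr'0, hr'1, hντ⟩ := hr'
  refine ⟨add_pos hr0 hr'0, hlt, fun A hA => ⟨?_, ?_⟩⟩
  · exact le_measure_fmExpand_add hM hgen hr0 hr1 hr'0.le ht hs
      (fun B hB => (hμν B hB).1) (fun B hB => (hντ B hB).1) hA
  · rw [add_comm r, add_comm t]
    exact le_measure_fmExpand_add hM hgen hr'0 hr'1 hr0.le hs ht
      (fun B hB => (hντ B hB).2) (fun B hB => (hμν B hB).2) hA

theorem sInf_prokSet_le_add [TopologicalSpace X] [OpensMeasurableSpace X]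
    (hM : IsFuzzyMetric M luk) (hgen : GeneratesTopology M) (ht : 0 < t) (hs : 0 < s)
    (hμν : (prokSet M μ ν t).Nonempty) (hντ : (prokSet M ν τ s).Nonempty) :
    sInf (prokSet M μ τ (t + s)) ≤ sInf (prokSet M μ ν t) + sInf (prokSet M ν τ s) := by
  refine le_of_forall_pos_lt_add fun ε hε => ?_
  obtain ⟨r, hr, hra⟩ := Real.lt_sInf_add_pos hμν (half_pos hε)
  obtain ⟨r', hr', hrb⟩ := Real.lt_sInf_add_pos hντ (half_pos hε)
  have hle : sInf (prokSet M μ τ (t + s)) ≤ r + r' := by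
    rcases lt_or_ge (r + r') 1 with hlt | hge
    · exact csInf_le bddBelow_prokSet (add_mem_prokSet hM hgen ht hs hr hr' hlt)
    · exact sInf_prokSet_le_one.trans hge
  linarith

end Prokhorov

end FuzzyMetric

/-- fuzzy triangle inequality for the fuzzy Prokhorov function. -/
theorem fuzzyProkhorov_triangle {X : Type*} [TopologicalSpace X] [CompactSpace X]
    [MeasurableSpace X] [BorelSpace X]
    (M : X → X → ℝ → ℝ) (hM : IsFuzzyMetric M luk) (hgen : GeneratesTopology M)
    (μ ν τ : ProbabilityMeasure X) (t s : ℝ) (ht : 0 < t) (hs : 0 < s) :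
    luk (fuzzyProkhorov M (μ : Measure X) (ν : Measure X) t)
        (fuzzyProkhorov M (ν : Measure X) (τ : Measure X) s) ≤
      fuzzyProkhorov M (μ : Measure X) (τ : Measure X) (t + s) := by
  have hle := sInf_prokSet_le_add hM hgen ht hs (prokSet_nonempty hM hgen μ ν ht)
    (prokSet_nonempty hM hgen ν τ hs)
  have hone : sInf (prokSet M (μ : Measure X) τ (t + s)) ≤ 1 := sInf_prokSet_le_one
  unfold luk fuzzyProkhorov
  exact max_le (by linarith) (by linarith)
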